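/- Let Θ ⊆ ℝ^n be a nonempty closed convex set, P : Θ → 𝒫(ℝ^m) a map assigning to each decision a Borel probability measure, ℓ : ℝ^m × ℝ^n → ℝ a loss, r : ℝ^n → ℝ a differentiable regularizer, and define J_η(θ) := ∫ ℓ(z,θ) dP(η)(z) + r(θ). Assume: (i) for every z, θ ↦ ℓ(z,θ) is differentiable and γ-strongly convex on Θ; (ii) r is ρ-strongly convex on Θ and γ + ρ > 0; (iii) ℓ is β-jointly smooth, i.e., ‖∇_θℓ(z,θ) − ∇_θℓ(z,θ')‖ ≤ β‖θ − θ'‖ and ‖∇_θℓ(z,θ) − ∇_θℓ(z',θ)‖ ≤ β‖z − z'‖ for all θ, θ' ∈ Θ and z, z' ∈ ℝ^m; (iv) for each η ∈ Θ and θ ∈ Θ, z ↦ ℓ(z,θ) and z ↦ ∇_θℓ(z,θ) are P(η)-integrable and θ ↦ ∫ ℓ(z,θ) dP(η)(z) is differentiable with gradient ∫ ∇_θℓ(z,θ) dP(η)(z); (v) P is ε-sensitive in Kantorovich dual form: for every L ≥ 0, every L-Lipschitz function g : ℝ^m → ℝ^n, and all η, η' ∈ Θ, ‖∫ g dP(η)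 − ∫ g dP(η')‖ ≤ εL‖η − η'‖; (vi) εβ < γ + ρ. Suppose for each η ∈ Θ, G(η) ∈ Θ minimizes θ ↦ J_η(θ) over Θ, and let θ_RPS ∈ Θ be a fixed point of G, i.e., G(θ_RPS) = θ_RPS. Then θ_RPS is the unique fixed point of G, and the iterates defined by θ_{t+1} = G(θ_t) from any θ_0 ∈ Θ satisfy ‖θ_t − θ_RPS‖ ≤ (εβ/(γ+ρ))^t · ‖θ_0 − θ_RPS‖ for all t ≥ 0. -/

import Mathlib

/-!
The decoupled risk `J_η` is `(γ + ρ)`-strongly convex on `Θ`. Comparing the first-order optimality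
conditions of its minimizer `G η` with those of the minimizer `G η'` of `J_η'` gives
`(γ + ρ) ‖G η - G η'‖ ≤ ‖∇J_η (G η') - ∇J_η' (G η')‖`, and the right-hand side is the difference
of the integrals of the `β`-Lipschitz map `z ↦ ∇_θ ℓ(z, G η')` under `P η` and `P η'`, which
`ε`-sensitivity bounds by `ε β ‖η - η'‖`. So `G` is a contraction of `Θ` with constant
`ε β / (γ + ρ) < 1`.
-/

open MeasureTheory Set
open scoped RealInnerProductSpace

section Convexity

variable {E : Type*} [NormedAddCommGroup E]

theorem UniformConvexOn.integral [NormedSpace ℝ E] {α : Type*} [MeasurableSpace α]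
    {μ : Measure α} [IsProbabilityMeasure μ] {s : Set E} {φ : ℝ → ℝ} {f : α → E → ℝ}
    (hf : ∀ z, UniformConvexOn s φ (f z)) (hint : ∀ x ∈ s, Integrable (fun z ↦ f z x) μ) :
    UniformConvexOn s φ (fun x ↦ ∫ z, f z x ∂μ) := by
  have ⟨z₀⟩ := nonempty_of_isProbabilityMeasure μ
  refine ⟨(hf z₀).1, fun x hx y hy a b ha hb hab ↦ ?_⟩
  have hax : Integrable (fun z ↦ a * f z x) μ := (hint x hx).const_mul a
  have hby : Integrable (fun z ↦ b * f z y) μ := (hint y hy).const_mul b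
  have hcomb : Integrable (fun z ↦ a * f z x + b * f z y) μ := hax.add hby
  calc ∫ z, f z (a • x + b • y) ∂μ
      ≤ ∫ z, (a * f z x + b * f z y - a * b * φ ‖x - y‖) ∂μ :=
        integral_mono (hint _ ((hf z₀).1 hx hy ha hb hab)) (hcomb.sub (integrable_const _))
          fun z ↦ (hf z).2 hx hy ha hb hab
    _ = a • ∫ z, f z x ∂μ + b • ∫ z, f z y ∂μ - a * b * φ ‖x - y‖ := by
        rw [integral_sub hcomb (integrable_const _), integral_add hax hby,
          integral_const_mul, integral_const_mul]
        simp

theorem StrongConvexOn.add [NormedSpace ℝ E] {s : Set E} {m n : ℝ} {f g : E → ℝ}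
    (hf : StrongConvexOn s m f) (hg : StrongConvexOn s n g) :
    StrongConvexOn s (m + n) (f + g) :=
  (UniformConvexOn.add hf hg).mono fun r ↦ le_of_eq (by simp only [Pi.add_apply]; ring)

theorem HasGradientAt.add [InnerProductSpace ℝ E] [CompleteSpace E] {f g : E → ℝ} {a b x : E}
    (hf : HasGradientAt f a x) (hg : HasGradientAt g b x) :
    HasGradientAt (fun y ↦ f y + g y) (a + b) x := by
  rw [hasGradientAt_iff_hasFDerivAt, map_add]
  exact hf.hasFDerivAt.add hg.hasFDerivAt

theorem ConvexOn.apply_sub_le_sub_of_hasFDerivAt [NormedSpace ℝ E] {s : Set E} {f : E → ℝ}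
    {f' : E →L[ℝ] ℝ} {x y : E} (hf : ConvexOn ℝ s f) (hx : x ∈ s) (hy : y ∈ s)
    (hf' : HasFDerivAt f f' x) : f' (y - x) ≤ f y - f x := by
  have hline : ConvexOn ℝ (AffineMap.lineMap (k := ℝ) x y ⁻¹' s)
      (f ∘ AffineMap.lineMap x y) :=
    hf.comp_affineMap _
  have hderiv : HasDerivAt (f ∘ AffineMap.lineMap (k := ℝ) x y) (f' (y - x)) 0 := by
    refine (AffineMap.lineMap_apply_zero (k := ℝ) x y ▸ hf').comp_hasDerivAt 0 ?_
    exact AffineMap.hasDerivAt_lineMap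
  simpa [slope_def_field] using
    hline.le_slope_of_hasDerivAt (by simpa using hx) (by simpa using hy) zero_lt_one hderiv

theorem StrongConvexOn.mul_sq_norm_sub_le_inner [InnerProductSpace ℝ E] [CompleteSpace E]
    {s : Set E} {m : ℝ} {f : E → ℝ} {x y a b : E} (hf : StrongConvexOn s m f)
    (hx : x ∈ s) (hy : y ∈ s) (ha : HasGradientAt f a x) (hb : HasGradientAt f b y) :
    m * ‖x - y‖ ^ 2 ≤ ⟪a - b, x - y⟫ := by
  have first_order : ∀ {u v c : E}, u ∈ s → v ∈ s → HasGradientAt f c u →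
      ⟪c, v - u⟫ ≤ (f v - m / 2 * ‖v‖ ^ 2) - (f u - m / 2 * ‖u‖ ^ 2) + m * ⟪u, v - u⟫ := by
    intro u v c hu hv hc
    have hd := hc.hasFDerivAt.sub ((hasStrictFDerivAt_norm_sq u).hasFDerivAt.const_mul (m / 2))
    have h := (strongConvexOn_iff_convex.1 hf).apply_sub_le_sub_of_hasFDerivAt hu hv hd
    simp only [sub_apply, smul_apply, InnerProductSpace.toDual_apply_apply, innerSL_apply_apply,
      smul_eq_mul, nsmul_eq_mul] at h
    linarith
  have h₁ := first_order hx hy ha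
  have h₂ := first_order hy hx hb
  rw [norm_sub_sq_real]
  simp only [inner_sub_left, inner_sub_right, real_inner_self_eq_norm_sq] at h₁ h₂ ⊢
  rw [real_inner_comm x y] at h₂
  linarith

theorem IsMinOn.inner_sub_nonneg_of_hasGradientAt [InnerProductSpace ℝ E] [CompleteSpace E]
    {s : Set E} {f : E → ℝ} {x y a : E} (hf : IsMinOn f s x) (hs : Convex ℝ s) (hx : x ∈ s)
    (hy : y ∈ s) (ha : HasGradientAt f a x) : 0 ≤ ⟪a, y - x⟫ := by
  simpa [InnerProductSpace.toDual_apply_apply] using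
    hf.localize.hasFDerivWithinAt_nonneg ha.hasFDerivAt.hasFDerivWithinAt
      (sub_mem_posTangentConeAt_of_segment_subset (hs.segment_subset hx hy))

theorem StrongConvexOn.mul_norm_sub_le_of_isMinOn [InnerProductSpace ℝ E] [CompleteSpace E]
    {s : Set E} {m : ℝ} {f g : E → ℝ} {x y a b c : E} (hf : StrongConvexOn s m f)
    (hx : x ∈ s) (hy : y ∈ s) (hfx : IsMinOn f s x) (hgy : IsMinOn g s y)
    (ha : HasGradientAt f a x) (hb : HasGradientAt f b y) (hc : HasGradientAt g c y) :
    m * ‖x - y‖ ≤ ‖b - c‖ := by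
  have hopt_f := hfx.inner_sub_nonneg_of_hasGradientAt hf.1 hx hy ha
  have hopt_g := hgy.inner_sub_nonneg_of_hasGradientAt hf.1 hy hx hc
  have hmono := hf.mul_sq_norm_sub_le_inner hx hy ha hb
  have hsq : m * ‖x - y‖ * ‖x - y‖ ≤ ‖b - c‖ * ‖x - y‖ :=
    calc m * ‖x - y‖ * ‖x - y‖ ≤ ⟪a - b, x - y⟫ := by nlinarith
      _ ≤ ⟪c - b, x - y⟫ := by
        simp only [inner_sub_left, inner_sub_right] at hopt_f hopt_g ⊢; linarith
      _ ≤ ‖c - b‖ * ‖x - y‖ := real_inner_le_norm _ _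
      _ = ‖b - c‖ * ‖x - y‖ := by rw [norm_sub_rev]
  rcases (norm_nonneg (x - y)).eq_or_lt with h | h
  · rw [← h, mul_zero]; exact norm_nonneg _
  · exact le_of_mul_le_mul_right hsq h

end Convexity

section Contraction

variable {X : Type*} [MetricSpace X] {s : Set X} {G : X → X} {K : ℝ} {p : X}

theorem dist_iterate_le_of_dist_le (hG : MapsTo G s s) (hK : 0 ≤ K)
    (hlip : ∀ x ∈ s, ∀ y ∈ s, dist (G x) (G y) ≤ K * dist x y) (hp : p ∈ s)
    (hfix : G p = p) {x : X} (hx : x ∈ s) (t : ℕ) :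
    dist (G^[t] x) p ≤ K ^ t * dist x p := by
  induction t with
  | zero => simp
  | succ t ih =>
    calc dist (G^[t + 1] x) p = dist (G (G^[t] x)) (G p) := by
          rw [Function.iterate_succ_apply', hfix]
      _ ≤ K * dist (G^[t] x) p := hlip _ (hG.iterate t hx) p hp
      _ ≤ K * (K ^ t * dist x p) := by gcongr
      _ = K ^ (t + 1) * dist x p := by ring

theorem eq_of_isFixedPt_of_dist_le (hK : K < 1)
    (hlip : ∀ x ∈ s, ∀ y ∈ s, dist (G x) (G y) ≤ K * dist x y) {x y : X} (hx : x ∈ s)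
    (hy : y ∈ s) (hGx : Function.IsFixedPt G x) (hGy : Function.IsFixedPt G y) : x = y := by
  have h := hlip x hx y hy
  rw [hGx, hGy] at h
  exact dist_le_zero.1 (by nlinarith [dist_nonneg (x := x) (y := y)])

end Contraction

theorem RRRM_linear_convergence_general {n m : ℕ} (γ ρ β ε : ℝ)
    (hβ : 0 ≤ β) (hε : 0 ≤ ε) (hγρ : 0 < γ + ρ)
    (Θ : Set (EuclideanSpace ℝ (Fin n)))
    (P : EuclideanSpace ℝ (Fin n) → Measure (EuclideanSpace ℝ (Fin m)))
    (hP : ∀ η, IsProbabilityMeasure (P η))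
    (ℓ : EuclideanSpace ℝ (Fin m) → EuclideanSpace ℝ (Fin n) → ℝ)
    (r : EuclideanSpace ℝ (Fin n) → ℝ) (hr : Differentiable ℝ r)
    -- (i) differentiability and γ-strong convexity of the loss in θ
    (hℓsc : ∀ z, ConvexOn ℝ Θ (fun θ => ℓ z θ - γ / 2 * ‖θ‖ ^ 2))
    -- (ii) ρ-strong convexity of the regularizer
    (hrsc : ConvexOn ℝ Θ (fun θ => r θ - ρ / 2 * ‖θ‖ ^ 2))
    -- (iii) β-joint smoothness
    (hsmooth₂ : ∀ θ ∈ Θ, ∀ z z' : EuclideanSpace ℝ (Fin m),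
      ‖gradient (fun t => ℓ z t) θ - gradient (fun t => ℓ z' t) θ‖ ≤ β * ‖z - z'‖)
    -- (iv) integrability and differentiation under the integral sign
    (hint : ∀ η ∈ Θ, ∀ θ ∈ Θ, Integrable (fun z => ℓ z θ) (P η) ∧
      Integrable (fun z => gradient (fun t => ℓ z t) θ) (P η))
    (hgrad : ∀ η ∈ Θ, ∀ θ ∈ Θ,
      HasGradientAt (fun t => ∫ z, ℓ z t ∂(P η))
        (∫ z, gradient (fun t => ℓ z t) θ ∂(P η)) θ)
    -- (v) ε-sensitivity in Kantorovich dual form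
    (hsens : ∀ L : ℝ, 0 ≤ L →
      ∀ g : EuclideanSpace ℝ (Fin m) → EuclideanSpace ℝ (Fin n),
        (∀ z z', ‖g z - g z'‖ ≤ L * ‖z - z'‖) →
        ∀ η ∈ Θ, ∀ η' ∈ Θ,
          ‖(∫ z, g z ∂(P η)) - ∫ z, g z ∂(P η')‖ ≤ ε * L * ‖η - η'‖)
    -- (vi) contraction condition
    (hcontr : ε * β < γ + ρ)
    -- G(η) minimizes J_η over Θ
    (G : EuclideanSpace ℝ (Fin n) → EuclideanSpace ℝ (Fin n))
    (hG : ∀ η ∈ Θ, G η ∈ Θ ∧ ∀ θ ∈ Θ,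
      (∫ z, ℓ z (G η) ∂(P η)) + r (G η) ≤ (∫ z, ℓ z θ ∂(P η)) + r θ)
    -- θ_RPS is a fixed point of G in Θ
    (θRPS : EuclideanSpace ℝ (Fin n)) (hRPSmem : θRPS ∈ Θ)
    (hRPSfix : G θRPS = θRPS) :
    (∀ θ' ∈ Θ, G θ' = θ' → θ' = θRPS) ∧
      ∀ θ₀ ∈ Θ, ∀ t : ℕ,
        ‖G^[t] θ₀ - θRPS‖ ≤ (ε * β / (γ + ρ)) ^ t * ‖θ₀ - θRPS‖ := by
  have hJconv : ∀ η ∈ Θ, StrongConvexOn Θ (γ + ρ) (fun θ ↦ (∫ z, ℓ z θ ∂(P η)) + r θ) :=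
    fun η hη ↦ StrongConvexOn.add
      (UniformConvexOn.integral (μ := P η) (fun z ↦ strongConvexOn_iff_convex.2 (hℓsc z))
        fun θ hθ ↦ (hint η hη θ hθ).1)
      (strongConvexOn_iff_convex.2 hrsc)
  have hJgrad : ∀ η ∈ Θ, ∀ θ ∈ Θ, HasGradientAt (fun θ ↦ (∫ z, ℓ z θ ∂(P η)) + r θ)
      ((∫ z, gradient (fun t ↦ ℓ z t) θ ∂(P η)) + gradient r θ) θ :=
    fun η hη θ hθ ↦ (hgrad η hη θ hθ).add (hr θ).hasGradientAt
  have hlip : ∀ η ∈ Θ, ∀ η' ∈ Θ, dist (G η) (G η') ≤ ε * β / (γ + ρ) * dist η η' := by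
    intro η hη η' hη'
    obtain ⟨hGη, hminη⟩ := hG η hη
    obtain ⟨hGη', hminη'⟩ := hG η' hη'
    have hpert := (hJconv η hη).mul_norm_sub_le_of_isMinOn hGη hGη'
      (isMinOn_iff.2 hminη) (isMinOn_iff.2 hminη') (hJgrad η hη _ hGη) (hJgrad η hη _ hGη')
      (hJgrad η' hη' _ hGη')
    rw [add_sub_add_right_eq_sub] at hpert
    have hshift := hsens β hβ _ (hsmooth₂ (G η') hGη') η hη η' hη'
    rw [dist_eq_norm, dist_eq_norm, div_mul_eq_mul_div, le_div_iff₀ hγρ]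
    linarith
  refine ⟨fun θ' hθ' hfix ↦ eq_of_isFixedPt_of_dist_le ((div_lt_one hγρ).2 hcontr) hlip hθ'
    hRPSmem hfix hRPSfix, fun θ₀ hθ₀ t ↦ ?_⟩
  simpa only [dist_eq_norm] using dist_iterate_le_of_dist_le (fun η hη ↦ (hG η hη).1)
    (by positivity) hlip hRPSmem hRPSfix hθ₀ t

/-- Theorem 1(b) of the paper: under `εβ < γ + ρ`, the repeated robust risk
minimization update `G` (the minimizer over `Θ` of the decoupled risk
`J_η(θ) = ∫ ℓ(z,θ) dP(η)(z) + r(θ)`) has a unique fixed point `θ_RPS` in `Θ`,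
and the iterates `θ_{t+1} = G(θ_t)` from any `θ₀ ∈ Θ` converge to `θ_RPS` at
the linear rate `εβ/(γ+ρ)`. Here `γ`-strong convexity of `f` on `Θ` means
convexity of `θ ↦ f θ - γ/2 * ‖θ‖²` on `Θ`, and the distribution map `P` is
`ε`-sensitive in the Kantorovich dual form. -/
theorem RRRM_linear_convergence {n m : ℕ} (γ ρ β ε : ℝ)
    (hβ : 0 ≤ β) (hε : 0 ≤ ε) (hγρ : 0 < γ + ρ)
    (Θ : Set (EuclideanSpace ℝ (Fin n))) (hΘne : Θ.Nonempty)
    (hΘcl : IsClosed Θ) (hΘconv : Convex ℝ Θ)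
    (P : EuclideanSpace ℝ (Fin n) → Measure (EuclideanSpace ℝ (Fin m)))
    (hP : ∀ η, IsProbabilityMeasure (P η))
    (ℓ : EuclideanSpace ℝ (Fin m) → EuclideanSpace ℝ (Fin n) → ℝ)
    (r : EuclideanSpace ℝ (Fin n) → ℝ) (hr : Differentiable ℝ r)
    -- (i) differentiability and γ-strong convexity of the loss in θ
    (hℓdiff : ∀ z, Differentiable ℝ (fun θ => ℓ z θ))
    (hℓsc : ∀ z, ConvexOn ℝ Θ (fun θ => ℓ z θ - γ / 2 * ‖θ‖ ^ 2))
    -- (ii) ρ-strong convexity of the regularizer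
    (hrsc : ConvexOn ℝ Θ (fun θ => r θ - ρ / 2 * ‖θ‖ ^ 2))
    -- (iii) β-joint smoothness
    (hsmooth₁ : ∀ z, ∀ θ ∈ Θ, ∀ θ' ∈ Θ,
      ‖gradient (fun t => ℓ z t) θ - gradient (fun t => ℓ z t) θ'‖ ≤ β * ‖θ - θ'‖)
    (hsmooth₂ : ∀ θ ∈ Θ, ∀ z z' : EuclideanSpace ℝ (Fin m),
      ‖gradient (fun t => ℓ z t) θ - gradient (fun t => ℓ z' t) θ‖ ≤ β * ‖z - z'‖)
    -- (iv) integrability and differentiation under the integral sign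
    (hint : ∀ η ∈ Θ, ∀ θ ∈ Θ, Integrable (fun z => ℓ z θ) (P η) ∧
      Integrable (fun z => gradient (fun t => ℓ z t) θ) (P η))
    (hgrad : ∀ η ∈ Θ, ∀ θ ∈ Θ,
      HasGradientAt (fun t => ∫ z, ℓ z t ∂(P η))
        (∫ z, gradient (fun t => ℓ z t) θ ∂(P η)) θ)
    -- (v) ε-sensitivity in Kantorovich dual form
    (hsens : ∀ L : ℝ, 0 ≤ L →
      ∀ g : EuclideanSpace ℝ (Fin m) → EuclideanSpace ℝ (Fin n),
        (∀ z z', ‖g z - g z'‖ ≤ L * ‖z - z'‖) →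
        ∀ η ∈ Θ, ∀ η' ∈ Θ,
          ‖(∫ z, g z ∂(P η)) - ∫ z, g z ∂(P η')‖ ≤ ε * L * ‖η - η'‖)
    -- (vi) contraction condition
    (hcontr : ε * β < γ + ρ)
    -- G(η) minimizes J_η over Θ
    (G : EuclideanSpace ℝ (Fin n) → EuclideanSpace ℝ (Fin n))
    (hG : ∀ η ∈ Θ, G η ∈ Θ ∧ ∀ θ ∈ Θ,
      (∫ z, ℓ z (G η) ∂(P η)) + r (G η) ≤ (∫ z, ℓ z θ ∂(P η)) + r θ)
    -- θ_RPS is a fixed point of G in Θ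
    (θRPS : EuclideanSpace ℝ (Fin n)) (hRPSmem : θRPS ∈ Θ)
    (hRPSfix : G θRPS = θRPS) :
    (∀ θ' ∈ Θ, G θ' = θ' → θ' = θRPS) ∧
      ∀ θ₀ ∈ Θ, ∀ t : ℕ,
        ‖G^[t] θ₀ - θRPS‖ ≤ (ε * β / (γ + ρ)) ^ t * ‖θ₀ - θRPS‖ :=
  RRRM_linear_convergence_general γ ρ β ε hβ hε hγρ Θ P hP ℓ r hr hℓsc hrsc hsmooth₂ hint hgrad
    hsens hcontr G hG θRPS hRPSmem hRPSfix
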